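/- arXiv:1811.11649 — 2 statements merged into one kernel-verified Lean document; each statement's English description precedes it below -/
import Mathlib

section
/- For two probability distributions P and Q on a finite alphabet A such that P is absolutely continuous with respect to Q, and with μ defined as the minimum of Q(a) over all a with Q(a) > 0, the KL divergence satisfies D(P||Q) ≤ log(1/μ) · V(P,Q), where V(P,Q) = ∑_a |P(a) − Q(a)| is the total variation distance. -/
open scoped BigOperators Classical

noncomputable section

/-- KL divergence in bits, with the convention that terms with `P a = 0` vanish. -/
def klDiv {A : Type*} [Fintype A] (P Q : A → ℝ) : ℝ :=
  ∑ a, if 0 < P a then P a * Real.logb 2 (P a / Q a) else 0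

/-- Unnormalized total variation distance `∑ |P a - Q a|`. -/
def tv {A : Type*} [Fintype A] (P Q : A → ℝ) : ℝ := ∑ a, |P a - Q a|

/-- `P` is a probability mass function on the finite type `A`. -/
def IsPMF {A : Type*} [Fintype A] (P : A → ℝ) : Prop :=
  (∀ a, 0 ≤ P a) ∧ ∑ a, P a = 1

/-- First marginal of a joint pmf. -/
def margFst {A B : Type*} [Fintype A] [Fintype B] (P : A × B → ℝ) : A → ℝ :=
  fun a => ∑ b, P (a, b)

/-- Second marginal of a joint pmf. -/
def margSnd {A B : Type*} [Fintype A] [Fintype B] (P : A × B → ℝ) : B → ℝ :=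
  fun b => ∑ a, P (a, b)

/-- Mutual information `I(A;B)` (in bits) of a joint pmf on `A × B`. -/
def mi {A B : Type*} [Fintype A] [Fintype B] (P : A × B → ℝ) : ℝ :=
  klDiv P (fun p => margFst P p.1 * margSnd P p.2)

/-- Shannon entropy (in bits). -/
def ent {A : Type*} [Fintype A] (P : A → ℝ) : ℝ :=
  ∑ a, if 0 < P a then -(P a * Real.logb 2 (P a)) else 0

/-- Conditional entropy `H(B|A)` (in bits) of a joint pmf on `A × B`. -/
def condEnt {A B : Type*} [Fintype A] [Fintype B] (P : A × B → ℝ) : ℝ :=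
  ∑ p : A × B, if 0 < P p then -(P p * Real.logb 2 (P p / margFst P p.1)) else 0

/-- Conditional mutual information `I(B;C|A)` (in bits) of a joint pmf on `A × B × C`. -/
def cmi {A B C : Type*} [Fintype A] [Fintype B] [Fintype C] (P : A × B × C → ℝ) : ℝ :=
  ∑ p : A × B × C, if 0 < P p then
    P p * Real.logb 2 ((P p * (∑ b, ∑ c, P (p.1, b, c))) /
      ((∑ c, P (p.1, p.2.1, c)) * (∑ b, P (p.1, b, p.2.2)))) else 0


/-!
Termwise: if `P a > Q a = q`, the convex function `x ↦ x log (x / q)` vanishes at `q`, so on `[q, 1]`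
it lies below its chord, giving `P a log (P a / q) ≤ (P a - q) · (-log q) / (1 - q)`. The factor
`(-log q) / (1 - q)` is the slope of the convex `-log` towards `1`, hence decreasing in `q`, so it is
at most `(-log μ) / (1 - μ) ≤ 2 log (1 / μ)`: here `q < 1` forces a second atom of `Q`, so `μ ≤ 1 / 2`.
Terms with `P a ≤ Q a` are nonpositive, and the positive parts of `P - Q` sum to `V(P, Q) / 2`.
-/

open Real

lemma mul_log_div_le_chord {p q : ℝ} (hq : 0 < q) (hqp : q < p) (hp : p ≤ 1) :
    p * log (p / q) ≤ (p - q) * (-log q / (1 - q)) := by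
  rcases hp.lt_or_eq with hp | rfl
  · have hconv := Real.convexOn_mul_log.secant_mono_aux1 (Set.mem_Ici.2 hq.le)
      (Set.mem_Ici.2 zero_le_one) hqp hp
    have h1q : 0 < 1 - q := by linarith
    rw [log_div (by linarith) hq.ne', mul_div_assoc', le_div_iff₀ h1q]
    simp only [log_one, mul_zero, add_zero] at hconv
    linear_combination hconv
  · rw [one_div, log_inv, one_mul, mul_div_cancel₀ _ (by linarith)]

lemma neg_log_div_one_sub_le {m q : ℝ} (hm : 0 < m) (hmq : m ≤ q) (hq : q < 1) :
    -log q / (1 - q) ≤ -log m / (1 - m) := by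
  have h := strictConcaveOn_log_Ioi.concaveOn.neg.secant_mono (Set.mem_Ioi.2 one_pos)
    (Set.mem_Ioi.2 hm) (Set.mem_Ioi.2 (hm.trans_le hmq)) (by linarith) hq.ne hmq
  simp only [Pi.neg_apply, log_one, neg_zero, sub_zero] at h
  rwa [← neg_sub 1 m, ← neg_sub 1 q, div_neg, div_neg, neg_le_neg_iff] at h

lemma mul_log_div_le_two_mul_neg_log {m p q : ℝ} (hm : 0 < m) (hm2 : m ≤ 1 / 2) (hmq : m ≤ q)
    (hqp : q < p) (hp : p ≤ 1) : p * log (p / q) ≤ 2 * -log m * (p - q) := by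
  have hslope : -log m / (1 - m) ≤ 2 * -log m := by
    rw [div_le_iff₀ (by linarith)]
    nlinarith [log_nonpos hm.le (by linarith : m ≤ 1)]
  calc p * log (p / q) ≤ (p - q) * (-log q / (1 - q)) :=
        mul_log_div_le_chord (hm.trans_le hmq) hqp hp
    _ ≤ (p - q) * (2 * -log m) := by
        refine mul_le_mul_of_nonneg_left ?_ (by linarith)
        exact (neg_log_div_one_sub_le hm hmq (by linarith)).trans hslope
    _ = 2 * -log m * (p - q) := by ring

section PMF

variable {A : Type*} [Fintype A]

lemma IsPMF.le_one {P : A → ℝ} (hP : IsPMF P) (a : A) : P a ≤ 1 :=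
  hP.2 ▸ Finset.single_le_sum (fun b _ => hP.1 b) (Finset.mem_univ a)

lemma IsPMF.le_half_of_mem_lowerBounds {Q : A → ℝ} {μ : ℝ} (hQ : IsPMF Q)
    (hμ : μ ∈ lowerBounds {x : ℝ | ∃ a, Q a = x ∧ 0 < x}) {a : A} (ha : 0 < Q a)
    (ha1 : Q a < 1) : μ ≤ 1 / 2 := by
  obtain ⟨b, hba, hb⟩ : ∃ b, b ≠ a ∧ 0 < Q b := by
    by_contra! h
    have : ∑ b, Q b = Q a := Finset.sum_eq_single a
      (fun b _ hba => le_antisymm (h b hba) (hQ.1 b)) (by simp)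
    linarith [hQ.2]
  have hpair : Q a + Q b ≤ 1 := by
    rw [← hQ.2, ← Finset.sum_pair hba.symm]
    exact Finset.sum_le_sum_of_subset_of_nonneg (Finset.subset_univ _) fun c _ _ => hQ.1 c
  linarith [hμ ⟨a, rfl, ha⟩, hμ ⟨b, rfl, hb⟩]

lemma tv_eq_two_mul_sum_posPart {P Q : A → ℝ} (h : ∑ a, P a = ∑ a, Q a) :
    tv P Q = 2 * ∑ a, (P a - Q a)⁺ := by
  have habs : ∀ a, |P a - Q a| = 2 * (P a - Q a)⁺ - (P a - Q a) := fun a => by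
    have := posPart_sub_negPart (P a - Q a)
    rw [← posPart_add_negPart]
    linarith
  simp only [tv, habs, Finset.sum_sub_distrib, ← Finset.mul_sum, h, sub_self, sub_zero]

lemma klDiv_term_le {P Q : A → ℝ} {μ : ℝ} (hP : IsPMF P) (hQ : IsPMF Q)
    (hac : ∀ a, 0 < P a → 0 < Q a) (hμ : IsLeast {x : ℝ | ∃ a, Q a = x ∧ 0 < x} μ) (a : A) :
    (if 0 < P a then P a * logb 2 (P a / Q a) else 0) ≤ 2 * logb 2 (1 / μ) * (P a - Q a)⁺ := by
  obtain ⟨⟨a₀, rfl, hμ0⟩, hμle⟩ := hμ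
  have hpos : 0 ≤ 2 * logb 2 (1 / Q a₀) * (P a - Q a)⁺ := by
    have : Q a₀ ≤ 1 := hQ.le_one a₀
    have : 0 ≤ logb 2 (1 / Q a₀) := logb_nonneg one_lt_two (by rw [le_div_iff₀ hμ0]; linarith)
    positivity
  split_ifs with hPa
  swap
  · exact hpos
  have hQa := hac a hPa
  rcases le_or_gt (P a) (Q a) with hPQ | hQP
  · exact (mul_nonpos_of_nonneg_of_nonpos hPa.le
      (logb_nonpos one_lt_two (by positivity) ((div_le_one hQa).2 hPQ))).trans hpos
  have hmq : Q a₀ ≤ Q a := hμle ⟨a, rfl, hQa⟩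
  have hlog := mul_log_div_le_two_mul_neg_log hμ0
    (hQ.le_half_of_mem_lowerBounds hμle hQa (hQP.trans_le (hP.le_one a))) hmq hQP (hP.le_one a)
  have hlogb := div_le_div_of_nonneg_right hlog (log_pos one_lt_two).le
  rw [posPart_eq_self.2 (by linarith), logb, logb, one_div, log_inv]
  linear_combination hlogb

end PMF

/-- Lemma 1 of the paper: `D(P‖Q) ≤ log(1/μ) · V(P,Q)` where `μ` is the minimum
positive mass of `Q` and `P ≪ Q`. -/
theorem stmt0 {A : Type*} [Fintype A] (P Q : A → ℝ) (μ : ℝ)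
    (hP : IsPMF P) (hQ : IsPMF Q)
    (hac : ∀ a, 0 < P a → 0 < Q a)
    (hμ : IsLeast {x : ℝ | ∃ a, Q a = x ∧ 0 < x} μ) :
    klDiv P Q ≤ Real.logb 2 (1 / μ) * tv P Q := by
  calc klDiv P Q ≤ ∑ a, 2 * logb 2 (1 / μ) * (P a - Q a)⁺ :=
        Finset.sum_le_sum fun a _ => klDiv_term_le hP hQ hac hμ a
    _ = logb 2 (1 / μ) * tv P Q := by
        rw [tv_eq_two_mul_sum_posPart (hP.2.trans hQ.2.symm), ← Finset.mul_sum]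
        ring
end
end

section
/- For any pmf P* on the product of finite sets 𝒳_1 × 𝒳_2, there exists a product distribution on 𝒳_1 × 𝒯, where 𝒯 is the set of functions from 𝒳_1 to 𝒳_2, given by P(x_1) = ∑_{x_2} P*(x_1, x_2) and P(t) = ∏_{x_1: P(x_1)>0} P*(x_1, t(x_1)) / P(x_1), such that for all (x_1, x_2) with P(x_1) > 0: P*(x_1, x_2) = P(x_1) · ∑_{t : t(x_1) = x_2} P(t). Moreover P(·) on 𝒯 is a valid probability distribution. -/
open scoped BigOperators Classical

noncomputable section

/-!
Write `q x₁ = P*(x₁, ·) / P(x₁)` for the conditional laws of `X₂` given `X₁`. The law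
`∏ x₁, q x₁ (t x₁)` on functions `t` is the product of the `q x₁`: a sum over `t` of such a
product factors as `∏ x₁, ∑ x₂, q x₁ x₂ = 1`, and the same factorization shows that the
coordinate `t x₁` is distributed as `q x₁`, which gives `P*(x₁, x₂) = P(x₁) · P(T(x₁) = x₂)`.
-/

section ProductKernel

variable {ι κ R : Type*} [Fintype ι] [DecidableEq ι] [Fintype κ] [CommSemiring R]
  {q : ι → κ → R}

theorem Fintype.sum_pi_prod_eq_one (hq : ∀ i, ∑ k, q i k = 1) :
    ∑ t : ι → κ, ∏ i, q i (t i) = 1 := by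
  simp [← Fintype.prod_sum, hq]

theorem Fintype.sum_pi_prod_ite_apply_eq (hq : ∀ i, ∑ k, q i k = 1) (i : ι) (k : κ) :
    ∑ t : ι → κ, (if t i = k then ∏ j, q j (t j) else 0) = q i k := by
  -- Zeroing `q i` off `k` removes the constraint `t i = k`; the unconstrained sum then factors.
  let r : ι → κ → R := fun j y => if j = i ∧ y ≠ k then 0 else q j y
  have h_restrict : ∀ t : ι → κ,
      (if t i = k then ∏ j, q j (t j) else 0) = ∏ j, r j (t j) := by
    intro t
    split_ifs with h
    · exact Finset.prod_congr rfl fun j _ => by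
        by_cases hj : j = i <;> simp [r, hj, h]
    · exact (Finset.prod_eq_zero (Finset.mem_univ i) (by simp [r, h])).symm
  have h_row : ∀ j, ∑ y, r j y = if j = i then q i k else 1 := by
    intro j
    by_cases hj : j = i
    · subst hj; simp [r, Finset.sum_ite_eq']
    · simp [r, hj, hq j]
  simp_rw [h_restrict, ← Fintype.prod_sum, h_row, Finset.prod_ite_eq']
  simp

end ProductKernel

theorem sum_div_sum_self {α K : Type*} [Fintype α] [DivisionSemiring K] {f : α → K}
    (hf : ∑ a, f a ≠ 0) : ∑ a, f a / ∑ b, f b = 1 := by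
  rw [← Finset.sum_div, div_self hf]

theorem stmt11_general {X1 X2 : Type*} [Fintype X1] [Fintype X2] [DecidableEq X1]
    (Pstar : X1 × X2 → ℝ) (hP : IsPMF Pstar)
    (hpos : ∀ x1, 0 < ∑ x2, Pstar (x1, x2)) :
    (∀ t : X1 → X2,
        0 ≤ ∏ x1, Pstar (x1, t x1) / (∑ x2, Pstar (x1, x2))) ∧
    (∑ t : X1 → X2, ∏ x1, Pstar (x1, t x1) / (∑ x2, Pstar (x1, x2))) = 1 ∧
    (∀ x1 x2, Pstar (x1, x2) = (∑ x2', Pstar (x1, x2')) *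
      ∑ t : X1 → X2, if t x1 = x2
        then ∏ x1', Pstar (x1', t x1') / (∑ x2', Pstar (x1', x2')) else 0) := by
  have h_cond : ∀ x1, ∑ x2, Pstar (x1, x2) / ∑ x2', Pstar (x1, x2') = 1 :=
    fun x1 => sum_div_sum_self (hpos x1).ne'
  refine ⟨fun t => Finset.prod_nonneg fun x1 _ => div_nonneg (hP.1 _) (hpos x1).le,
    Fintype.sum_pi_prod_eq_one h_cond, fun x1 x2 => ?_⟩
  rw [Fintype.sum_pi_prod_ite_apply_eq h_cond, mul_div_cancel₀ _ (hpos x1).ne']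

/-- Shannon-strategy decomposition: any joint pmf `P*` on `𝒳₁ × 𝒳₂` with everywhere
positive `X₁`-marginal factors as an independent pair `(X₁, T)` with `X₂ = T(X₁)`. -/
theorem stmt11 {X1 X2 : Type*} [Fintype X1] [Fintype X2] [DecidableEq X1]
    [Nonempty X1] [Nonempty X2]
    (Pstar : X1 × X2 → ℝ) (hP : IsPMF Pstar)
    (hpos : ∀ x1, 0 < ∑ x2, Pstar (x1, x2)) :
    (∀ t : X1 → X2,
        0 ≤ ∏ x1, Pstar (x1, t x1) / (∑ x2, Pstar (x1, x2))) ∧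
    (∑ t : X1 → X2, ∏ x1, Pstar (x1, t x1) / (∑ x2, Pstar (x1, x2))) = 1 ∧
    (∀ x1 x2, Pstar (x1, x2) = (∑ x2', Pstar (x1, x2')) *
      ∑ t : X1 → X2, if t x1 = x2
        then ∏ x1', Pstar (x1', t x1') / (∑ x2', Pstar (x1', x2')) else 0) :=
  stmt11_general Pstar hP hpos
end
end
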